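/- Let T be a μ-invariant Markov kernel on E and let K* : [0, ∞) → [0, ∞] be convex with K*(0) = 0 and K*(v) ≤ v for all v ≥ 0. If TT* satisfies the K*-WPI, then T*T satisfies the K̃*-WPI with K̃*(v) := K*(v/2): for every f ∈ L²₀(μ) with 0 < ‖f‖_osc < ∞, K*((1/2)·‖f‖²_μ/‖f‖²_osc) ≤ ℰ_μ(T*T, f)/‖f‖²_osc. -/

import Mathlib

open MeasureTheory ENNReal

noncomputable section

variable {α : Type*} [MeasurableSpace α]

/-- Oscillation seminorm, valued in `[0,∞]`. -/
def oscNorm (μ : Measure α) (f : α → ℝ) : ℝ≥0∞ :=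
  essSup (fun p : α × α => ENNReal.ofReal |f p.1 - f p.2|) (μ.prod μ)

/-- The Dirichlet form `ℰ_μ(T, f) = ⟨(I − T)f, f⟩_μ`. -/
def dirichletForm (μ : Measure α) (T : Lp ℝ 2 μ →L[ℝ] Lp ℝ 2 μ) (f : Lp ℝ 2 μ) : ℝ :=
  @inner ℝ _ _ (f - T f) f

/-- `T` is the `L²(μ)` operator induced by a `μ`-invariant Markov kernel. -/
def IsMarkovOperator (μ : Measure α) (T : Lp ℝ 2 μ →L[ℝ] Lp ℝ 2 μ) : Prop :=
  ∃ K : α → Measure α, Measurable K ∧ (∀ x, IsProbabilityMeasure (K x)) ∧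
    μ.bind K = μ ∧ ∀ f : Lp ℝ 2 μ, ∀ᵐ x ∂μ, T f x = ∫ y, f y ∂(K x)

/-- `S` satisfies the `K*`-WPI. -/
def KstarWPI (μ : Measure α) (Ks : ℝ → ℝ≥0∞) (S : Lp ℝ 2 μ →L[ℝ] Lp ℝ 2 μ) : Prop :=
  ∀ f : Lp ℝ 2 μ, (∫ x, f x ∂μ) = 0 → 0 < oscNorm μ f → oscNorm μ f < ⊤ →
    Ks (‖f‖ ^ 2 / ((oscNorm μ f).toReal) ^ 2) ≤
      ENNReal.ofReal (dirichletForm μ S f / ((oscNorm μ f).toReal) ^ 2)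

/-!
Put `g = T f`. Then `ℰ(T†T, f) = ‖f‖² - ‖g‖²` and `ℰ(TT†, g) = ‖g‖² - ‖T†g‖²`; since
`‖g‖² = ⟪f, T†g⟫ ≤ ‖f‖ ‖T†g‖`, the second is at most the first. If `‖g‖² ≤ ‖f‖² / 2`, then
`ℰ(T†T, f) ≥ ‖f‖² / 2` and `K*(v) ≤ v` suffices. Otherwise `g ≠ 0`; as `T` is Markov, `g` is
centred and `‖g‖_osc ≤ ‖f‖_osc`, so the WPI of `TT†` applies to `g`. Convexity with `K*(0) = 0`
makes `K*(λ v) ≤ λ K*(v)` for `λ ∈ [0, 1]`, which transports that inequality from the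
normalisation `‖g‖²_osc` to `‖f‖²_osc`, and `K*(‖f‖² / 2) ≤ K*(‖g‖²)` by monotonicity.
-/

open ProbabilityTheory

-- Mathlib's `ConvexOn` does not apply: `ℝ≥0∞` is not an `ℝ`-module.
def ConvexOnNonneg (φ : ℝ → ℝ≥0∞) : Prop :=
  ∀ v w t : ℝ, 0 ≤ v → 0 ≤ w → 0 ≤ t → t ≤ 1 →
    φ (t * v + (1 - t) * w) ≤ ENNReal.ofReal t * φ v + ENNReal.ofReal (1 - t) * φ w

namespace ConvexOnNonneg

variable {φ : ℝ → ℝ≥0∞}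

lemma map_mul_le (hφ : ConvexOnNonneg φ) (h0 : φ 0 = 0) {t v : ℝ} (ht0 : 0 ≤ t) (ht1 : t ≤ 1)
    (hv : 0 ≤ v) : φ (t * v) ≤ ENNReal.ofReal t * φ v := by
  simpa [h0] using hφ v 0 t hv le_rfl ht0 ht1

lemma map_le_map (hφ : ConvexOnNonneg φ) (h0 : φ 0 = 0) {u v : ℝ} (hu : 0 ≤ u) (huv : u ≤ v) :
    φ u ≤ φ v := by
  rcases (hu.trans huv).eq_or_lt with hv | hv
  · rw [le_antisymm (huv.trans hv.symm.le) hu, ← hv]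
  · have hquot : u / v ≤ 1 := (div_le_one hv).mpr huv
    calc φ u = φ (u / v * v) := by rw [div_mul_cancel₀ u hv.ne']
      _ ≤ ENNReal.ofReal (u / v) * φ v := hφ.map_mul_le h0 (by positivity) hquot hv.le
      _ ≤ φ v := mul_le_of_le_one_left' (ENNReal.ofReal_le_one.mpr hquot)

lemma map_div_le_of_le (hφ : ConvexOnNonneg φ) (h0 : φ 0 = 0) {v D m M : ℝ} (hv : 0 ≤ v)
    (hm : 0 < m) (hmM : m ≤ M) (h : φ (v / m) ≤ ENNReal.ofReal (D / m)) :
    φ (v / M) ≤ ENNReal.ofReal (D / M) := by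
  have hM : 0 < M := hm.trans_le hmM
  have ht : 0 ≤ m / M := by positivity
  calc φ (v / M) = φ (m / M * (v / m)) := by field_simp
    _ ≤ ENNReal.ofReal (m / M) * φ (v / m) :=
        hφ.map_mul_le h0 ht ((div_le_one hM).mpr hmM) (by positivity)
    _ ≤ ENNReal.ofReal (m / M) * ENNReal.ofReal (D / m) := by gcongr
    _ = ENNReal.ofReal (D / M) := by rw [← ENNReal.ofReal_mul ht]; field_simp

end ConvexOnNonneg

section Dirichlet

variable {μ : Measure α}

lemma dirichletForm_adjoint_comp (T : Lp ℝ 2 μ →L[ℝ] Lp ℝ 2 μ) (f : Lp ℝ 2 μ) :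
    dirichletForm μ (ContinuousLinearMap.adjoint T ∘L T) f = ‖f‖ ^ 2 - ‖T f‖ ^ 2 := by
  rw [dirichletForm, inner_sub_left, real_inner_self_eq_norm_sq, ContinuousLinearMap.comp_apply,
    ContinuousLinearMap.adjoint_inner_left, real_inner_self_eq_norm_sq]

lemma dirichletForm_comp_adjoint_apply_le (T : Lp ℝ 2 μ →L[ℝ] Lp ℝ 2 μ) (f : Lp ℝ 2 μ) :
    dirichletForm μ (T ∘L ContinuousLinearMap.adjoint T) (T f) ≤
      dirichletForm μ (ContinuousLinearMap.adjoint T ∘L T) f := by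
  have h := dirichletForm_adjoint_comp (ContinuousLinearMap.adjoint T) (T f)
  rw [ContinuousLinearMap.adjoint_adjoint] at h
  rw [h, dirichletForm_adjoint_comp]
  have hCS : ‖T f‖ ^ 2 ≤ ‖f‖ * ‖ContinuousLinearMap.adjoint T (T f)‖ := by
    rw [← real_inner_self_eq_norm_sq, ← ContinuousLinearMap.adjoint_inner_right]
    exact real_inner_le_norm _ _
  -- `2 ‖T f‖² ≤ 2 ‖f‖ ‖T† T f‖ ≤ ‖f‖² + ‖T† T f‖²`
  nlinarith [sq_nonneg (‖f‖ - ‖ContinuousLinearMap.adjoint T (T f)‖)]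

end Dirichlet

section Oscillation

variable {μ : Measure α} {f : α → ℝ}

lemma ae_ae_abs_sub_le_oscNorm [SFinite μ] (hf : oscNorm μ f ≠ ⊤) :
    ∀ᵐ x ∂μ, ∀ᵐ y ∂μ, |f x - f y| ≤ (oscNorm μ f).toReal := by
  refine Measure.ae_ae_of_ae_prod (p := fun p => |f p.1 - f p.2| ≤ _) ?_
  filter_upwards [ae_le_essSup (μ := μ.prod μ) fun p => ENNReal.ofReal |f p.1 - f p.2|] with p hp
  exact (ENNReal.ofReal_le_iff_le_toReal hf).mp hp

lemma exists_ae_mem_Icc_of_oscNorm_ne_top [IsProbabilityMeasure μ] (hf : oscNorm μ f ≠ ⊤) :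
    ∃ c, ∀ᵐ x ∂μ, f x ∈ Set.Icc (c - (oscNorm μ f).toReal) c := by
  set M := (oscNorm μ f).toReal
  have hosc := ae_ae_abs_sub_le_oscNorm hf
  obtain ⟨x₀, hx₀⟩ := hosc.exists
  have hbdd : Filter.IsBoundedUnder (· ≤ ·) (ae μ) f :=
    Filter.isBoundedUnder_of_eventually_le (a := f x₀ + M) <| by
      filter_upwards [hx₀] with y hy
      linarith [neg_abs_le (f x₀ - f y)]
  have hcobdd : Filter.IsCoboundedUnder (· ≤ ·) (ae μ) f :=
    Filter.IsBoundedUnder.isCoboundedUnder_flip <|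
      Filter.isBoundedUnder_of_eventually_ge (a := f x₀ - M) <| by
        filter_upwards [hx₀] with y hy
        linarith [le_abs_self (f x₀ - f y)]
  refine ⟨essSup f μ, ?_⟩
  filter_upwards [hosc, ae_le_essSup hbdd] with x hx hle
  refine ⟨?_, hle⟩
  have : essSup f μ ≤ f x + M := essSup_le_of_ae_le _ (by
    filter_upwards [hx] with y hy
    linarith [neg_abs_le (f x - f y)]) hcobdd
  linarith

lemma oscNorm_le_of_ae_mem_Icc [SFinite μ] {a b : ℝ} (h : ∀ᵐ x ∂μ, f x ∈ Set.Icc a b) :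
    oscNorm μ f ≤ ENNReal.ofReal (b - a) := by
  refine essSup_le_of_ae_le _ ?_
  filter_upwards [Measure.quasiMeasurePreserving_fst.ae h,
    Measure.quasiMeasurePreserving_snd.ae h] with p h₁ h₂
  refine ENNReal.ofReal_le_ofReal (abs_sub_le_iff.mpr ⟨?_, ?_⟩) <;> linarith [h₁.1, h₁.2, h₂.1, h₂.2]

lemma oscNorm_pos_of_integral_eq_zero [IsProbabilityMeasure μ] {g : Lp ℝ 2 μ} (hg : g ≠ 0)
    (hg0 : ∫ x, g x ∂μ = 0) : 0 < oscNorm μ g := by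
  refine pos_iff_ne_zero.mpr fun hosc => hg ?_
  obtain ⟨c, hc⟩ := exists_ae_mem_Icc_of_oscNorm_ne_top (hosc ▸ ENNReal.zero_ne_top)
  have hgc : ⇑g =ᵐ[μ] fun _ => c := by
    filter_upwards [hc] with x hx
    simp only [hosc, ENNReal.toReal_zero, sub_zero, Set.Icc_self, Set.mem_singleton_iff] at hx
    exact hx
  have hc0 : c = 0 := by simpa [integral_congr_ae hgc] using hg0
  exact Lp.eq_zero_iff_ae_eq_zero.mpr (hgc.trans (by simp [hc0, Pi.zero_def]))

end Oscillation

lemma MeasureTheory.Measure.integral_comp_kernel {β E : Type*} [MeasurableSpace β]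
    [NormedAddCommGroup E] [NormedSpace ℝ E] {μ : Measure α} (κ : Kernel α β) {f : β → E}
    (hf : Integrable f (κ ∘ₘ μ)) : ∫ y, f y ∂(κ ∘ₘ μ) = ∫ x, ∫ y, f y ∂κ x ∂μ := by
  rw [Measure.comp_eq_comp_const_apply] at hf ⊢
  rw [Kernel.integral_comp hf, Kernel.const_apply]

namespace IsMarkovOperator

variable {μ : Measure α} {T : Lp ℝ 2 μ →L[ℝ] Lp ℝ 2 μ}

lemma integral_apply [IsFiniteMeasure μ] (hT : IsMarkovOperator μ T) (f : Lp ℝ 2 μ) :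
    ∫ x, T f x ∂μ = ∫ x, f x ∂μ := by
  obtain ⟨K, hK, -, hinv, hrep⟩ := hT
  let κ : Kernel α α := ⟨K, hK⟩
  have hκμ : κ ∘ₘ μ = μ := hinv
  have hf : Integrable f (κ ∘ₘ μ) := by rw [hκμ]; exact (Lp.memLp f).integrable one_le_two
  calc ∫ x, T f x ∂μ = ∫ x, ∫ y, f y ∂κ x ∂μ := integral_congr_ae (hrep f)
    _ = ∫ y, f y ∂(κ ∘ₘ μ) := (Measure.integral_comp_kernel κ hf).symm
    _ = ∫ x, f x ∂μ := by rw [hκμ]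

lemma ae_mem_Icc_apply (hT : IsMarkovOperator μ T) {f : Lp ℝ 2 μ} {a b : ℝ}
    (hf : ∀ᵐ x ∂μ, f x ∈ Set.Icc a b) : ∀ᵐ x ∂μ, T f x ∈ Set.Icc a b := by
  obtain ⟨K, hK, hKprob, hinv, hrep⟩ := hT
  let κ : Kernel α α := ⟨K, hK⟩
  have hκμ : κ ∘ₘ μ = μ := hinv
  have hfK : ∀ᵐ x ∂μ, ∀ᵐ y ∂K x, f y ∈ Set.Icc a b :=
    Measure.ae_ae_of_ae_comp (κ := κ) (by rwa [hκμ])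
  filter_upwards [hrep f, hfK] with x hx hxK
  rw [hx]
  exact (convex_Icc a b).integral_mem isClosed_Icc hxK
    (Integrable.of_mem_Icc a b (Lp.stronglyMeasurable f).measurable.aemeasurable hxK)

lemma oscNorm_apply_le [IsProbabilityMeasure μ] (hT : IsMarkovOperator μ T) (f : Lp ℝ 2 μ) :
    oscNorm μ (T f) ≤ oscNorm μ f := by
  rcases eq_or_ne (oscNorm μ f) ⊤ with htop | htop
  · exact htop ▸ le_top
  obtain ⟨c, hc⟩ := exists_ae_mem_Icc_of_oscNorm_ne_top htop
  calc oscNorm μ (T f) ≤ ENNReal.ofReal (c - (c - (oscNorm μ f).toReal)) :=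
        oscNorm_le_of_ae_mem_Icc (hT.ae_mem_Icc_apply hc)
    _ = oscNorm μ f := by rw [sub_sub_self, ENNReal.ofReal_toReal htop]

end IsMarkovOperator

/-- if `TT*` satisfies the `K*`-WPI with a convex `K*` such that `K*(0) = 0`
and `K*(v) ≤ v`, then `T*T` satisfies the `K̃*`-WPI with `K̃*(v) = K*(v/2)`. -/
theorem stmt6
    (μ : Measure α) [IsProbabilityMeasure μ]
    (T : Lp ℝ 2 μ →L[ℝ] Lp ℝ 2 μ) (hT : IsMarkovOperator μ T)
    (Ks : ℝ → ℝ≥0∞) (hKs0 : Ks 0 = 0)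
    (hKsle : ∀ v : ℝ, 0 ≤ v → Ks v ≤ ENNReal.ofReal v)
    (hKsconvex : ∀ v w t : ℝ, 0 ≤ v → 0 ≤ w → 0 ≤ t → t ≤ 1 →
      Ks (t * v + (1 - t) * w) ≤ ENNReal.ofReal t * Ks v + ENNReal.ofReal (1 - t) * Ks w)
    (hwpi : KstarWPI μ Ks (T ∘L (ContinuousLinearMap.adjoint T))) :
    ∀ f : Lp ℝ 2 μ, (∫ x, f x ∂μ) = 0 → 0 < oscNorm μ f → oscNorm μ f < ⊤ →
      Ks ((1 / 2) * (‖f‖ ^ 2 / ((oscNorm μ f).toReal) ^ 2)) ≤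
        ENNReal.ofReal
          (dirichletForm μ ((ContinuousLinearMap.adjoint T) ∘L T) f /
            ((oscNorm μ f).toReal) ^ 2) := by
  intro f hf0 hosc0 hoscT
  set M := (oscNorm μ f).toReal
  have hM : 0 < M := ENNReal.toReal_pos hosc0.ne' hoscT.ne
  have hhalf : 1 / 2 * (‖f‖ ^ 2 / M ^ 2) = ‖f‖ ^ 2 / 2 / M ^ 2 := by ring
  rcases le_or_gt (‖T f‖ ^ 2) (‖f‖ ^ 2 / 2) with hsmall | hlarge
  · refine (hKsle _ (by positivity)).trans (ENNReal.ofReal_le_ofReal ?_)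
    rw [hhalf, dirichletForm_adjoint_comp]
    gcongr
    linarith
  · have hTf : T f ≠ 0 := fun h => by
      rw [h, norm_zero] at hlarge
      linarith [sq_nonneg ‖f‖]
    have hmean : ∫ x, T f x ∂μ = 0 := (hT.integral_apply f).trans hf0
    have hosc_le := hT.oscNorm_apply_le f
    have hosc_pos := oscNorm_pos_of_integral_eq_zero hTf hmean
    have hosc_lt := hosc_le.trans_lt hoscT
    calc Ks (1 / 2 * (‖f‖ ^ 2 / M ^ 2)) ≤ Ks (‖T f‖ ^ 2 / M ^ 2) :=
          ConvexOnNonneg.map_le_map hKsconvex hKs0 (by positivity) (by rw [hhalf]; gcongr)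
      _ ≤ ENNReal.ofReal (dirichletForm μ (T ∘L ContinuousLinearMap.adjoint T) (T f) / M ^ 2) :=
          ConvexOnNonneg.map_div_le_of_le hKsconvex hKs0 (by positivity)
            (pow_pos (ENNReal.toReal_pos hosc_pos.ne' hosc_lt.ne) 2)
            (by gcongr; exact ENNReal.toReal_mono hoscT.ne hosc_le)
            (hwpi (T f) hmean hosc_pos hosc_lt)
      _ ≤ _ := by gcongr; exact dirichletForm_comp_adjoint_apply_le T f

end
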